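/- arXiv:1006.4251 — 2 statements merged into one kernel-verified Lean document; each statement's English description precedes it below -/
import Mathlib

section
/- Let ⟨A, Δ⟩ be a Jordan coalgebra over a field k of characteristic not 2 whose dual algebra A* is unital, let B be a finite-dimensional subcoalgebra of ⟨A, Δ⟩, and let V be a subspace of A* with A* = V ⊕ B^⊥. Let D = V ⊕ B be the null extension of the dual algebra (V, *) of ⟨B, Δ|_B⟩, and for x, y ∈ D write {x,y} = x'y' − y'x' with right multiplications taken in D. Then Σᵢ{fᵢ, bᵢ} = 0 if and only if Σᵢ[fᵢ, bᵢ] = 0 (fᵢ ∈ V, bᵢ ∈ B), so the spaces {V, B} and [V, B] are isomorphic; and, identifying {V, V} with the space of all linear functionals on [V, B], the inclusion [V, V] ⊆ [V, B]* + [V, B]^⊥ holds, where [V, B]^⊥ is the orthogonal complement of [V, B] in the space ([A*, A])* (into which [V, V] is embedded via the embedding of Proposition 3). -/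
/-!
Fix projections `A* → V` along `B^⊥` and `A → B` along some complement of `B`. An operator `w`
on `D = V ⊕ B` then extends to the operator `i ∘ w ∘ p` on `C = A* ⊕ A`, where `i` is the
inclusion and `p` the projection; since `p ∘ i = id`, this extension is injective. Because `B`
is a subcoalgebra, `⟨fg, b⟩` and `f·b` for `b ∈ B` depend only on the restrictions of `f` and
`g` to `B`, so the extension sends `{f, b}` to `[f, b]`, which gives the first two claims. The
same locality shows that `[f, g]` and `{f, g}` agree on `V × B`, so every element of `[V, V]`
agrees on `[V, B]` with an inner derivation of `(V, *)`.
-/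

open TensorProduct

variable {k : Type*} [Field k] {A : Type*} [AddCommGroup A] [Module k A]

/-- The multiplication on the dual space `A*` induced by a comultiplication `Δ`:
`⟨fg, a⟩ = Σ ⟨f, a₍₁₎⟩⟨g, a₍₂₎⟩`. -/
noncomputable def dmul (Δ : A →ₗ[k] A ⊗[k] A) (f g : (A →ₗ[k] k)) : (A →ₗ[k] k) :=
  (TensorProduct.lid k k).toLinearMap ∘ₗ TensorProduct.map f g ∘ₗ Δ

/-- The left action `f·a = Σ a₍₁₎ ⟨f, a₍₂₎⟩` of the dual algebra on `A`. -/
noncomputable def lact (Δ : A →ₗ[k] A ⊗[k] A) (f : (A →ₗ[k] k)) : A →ₗ[k] A :=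
  (TensorProduct.rid k A).toLinearMap ∘ₗ TensorProduct.map LinearMap.id f ∘ₗ Δ

/-- The right action `a·f = Σ ⟨f, a₍₁₎⟩ a₍₂₎` of the dual algebra on `A`. -/
noncomputable def ract (Δ : A →ₗ[k] A ⊗[k] A) (f : (A →ₗ[k] k)) : A →ₗ[k] A :=
  (TensorProduct.lid k A).toLinearMap ∘ₗ TensorProduct.map f LinearMap.id ∘ₗ Δ

/-- `⟨A, Δ⟩` is a Jordan coalgebra: its dual algebra is commutative and satisfies
the Jordan identity `((ff)g)f = (ff)(gf)`. -/
def IsJordanCoalgebra (Δ : A →ₗ[k] A ⊗[k] A) : Prop :=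
  (∀ f g : (A →ₗ[k] k), dmul Δ f g = dmul Δ g f) ∧
  (∀ f g : (A →ₗ[k] k),
    dmul Δ (dmul Δ (dmul Δ f f) g) f = dmul Δ (dmul Δ f f) (dmul Δ g f))

/-- `B` is a subcoalgebra: `Δ(B) ⊆ B ⊗ B`. -/
def IsSubcoalgebra (Δ : A →ₗ[k] A ⊗[k] A) (B : Submodule k A) : Prop :=
  ∀ b ∈ B, Δ b ∈ LinearMap.range (TensorProduct.map B.subtype B.subtype)

/-- `B` is a coideal: `Δ(B) ⊆ B ⊗ A + A ⊗ B`. -/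
def IsCoideal (Δ : A →ₗ[k] A ⊗[k] A) (B : Submodule k A) : Prop :=
  ∀ b ∈ B, Δ b ∈
    LinearMap.range (TensorProduct.map B.subtype (LinearMap.id (R := k) (M := A))) ⊔
    LinearMap.range (TensorProduct.map (LinearMap.id (R := k) (M := A)) B.subtype)

/-- A derivation of the dual algebra `A*`. -/
def IsDerivation (Δ : A →ₗ[k] A ⊗[k] A)
    (d : (A →ₗ[k] k) →ₗ[k] (A →ₗ[k] k)) : Prop :=
  ∀ f g : (A →ₗ[k] k), d (dmul Δ f g) = dmul Δ (d f) g + dmul Δ f (d g)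

theorem dmul_add_left (Δ : A →ₗ[k] A ⊗[k] A) (f₁ f₂ g : (A →ₗ[k] k)) :
    dmul Δ (f₁ + f₂) g = dmul Δ f₁ g + dmul Δ f₂ g := by
  unfold dmul; rw [TensorProduct.map_add_left]; ext a; simp

theorem dmul_add_right (Δ : A →ₗ[k] A ⊗[k] A) (f g₁ g₂ : (A →ₗ[k] k)) :
    dmul Δ f (g₁ + g₂) = dmul Δ f g₁ + dmul Δ f g₂ := by
  unfold dmul; rw [TensorProduct.map_add_right]; ext a; simp

theorem dmul_smul_left (Δ : A →ₗ[k] A ⊗[k] A) (c : k) (f g : (A →ₗ[k] k)) :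
    dmul Δ (c • f) g = c • dmul Δ f g := by
  unfold dmul; rw [TensorProduct.map_smul_left]; ext a; simp

theorem dmul_smul_right (Δ : A →ₗ[k] A ⊗[k] A) (c : k) (f g : (A →ₗ[k] k)) :
    dmul Δ f (c • g) = c • dmul Δ f g := by
  unfold dmul; rw [TensorProduct.map_smul_right]; ext a; simp

theorem dmul_zero_left (Δ : A →ₗ[k] A ⊗[k] A) (g : (A →ₗ[k] k)) :
    dmul Δ (0 : (A →ₗ[k] k)) g = 0 := by
  ext a; simp [dmul]

theorem dmul_zero_right (Δ : A →ₗ[k] A ⊗[k] A) (f : (A →ₗ[k] k)) :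
    dmul Δ f (0 : (A →ₗ[k] k)) = 0 := by
  ext a; simp [dmul]

/-- The operator of right multiplication `f' : g ↦ gf` on the dual algebra. -/
noncomputable def Rop (Δ : A →ₗ[k] A ⊗[k] A) (f : (A →ₗ[k] k)) :
    (A →ₗ[k] k) →ₗ[k] (A →ₗ[k] k) where
  toFun g := dmul Δ g f
  map_add' g₁ g₂ := dmul_add_left Δ g₁ g₂ f
  map_smul' c g := dmul_smul_left Δ c g f

/-- The inner derivation `[f,g] = f'g' - g'f'` (in right-operator convention,
`x[f,g] = (xf)g - (xg)f`). -/
noncomputable def commD (Δ : A →ₗ[k] A ⊗[k] A) (f g : (A →ₗ[k] k)) :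
    (A →ₗ[k] k) →ₗ[k] (A →ₗ[k] k) :=
  Rop Δ g ∘ₗ Rop Δ f - Rop Δ f ∘ₗ Rop Δ g

/-- The space of inner derivations of the dual algebra. -/
noncomputable def IntDer (Δ : A →ₗ[k] A ⊗[k] A) :
    Submodule k ((A →ₗ[k] k) →ₗ[k] (A →ₗ[k] k)) :=
  Submodule.span k {d | ∃ f g : (A →ₗ[k] k), d = commD Δ f g}

/-- A weakly inner derivation of the dual algebra: a derivation that agrees with some
inner derivation on every finite-dimensional subcoalgebra. -/
def IsWIntDer (Δ : A →ₗ[k] A ⊗[k] A)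
    (d : (A →ₗ[k] k) →ₗ[k] (A →ₗ[k] k)) : Prop :=
  IsDerivation Δ d ∧
  ∀ B : Submodule k A, IsSubcoalgebra Δ B → FiniteDimensional k B →
    ∃ i ∈ IntDer Δ, ∀ f : (A →ₗ[k] k), ∀ b ∈ B, d f b = i f b

/-- The space of weakly inner derivations, as a submodule of `End(A*)`. -/
noncomputable def WIntDer (Δ : A →ₗ[k] A ⊗[k] A) :
    Submodule k ((A →ₗ[k] k) →ₗ[k] (A →ₗ[k] k)) where
  carrier := {d | IsWIntDer Δ d}
  zero_mem' := by
    refine ⟨fun f g => by simp [dmul_zero_left, dmul_zero_right],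
      fun B hB hfin => ⟨0, Submodule.zero_mem _, fun f b hb => by simp⟩⟩
  add_mem' := by
    rintro d₁ d₂ ⟨hd₁, hw₁⟩ ⟨hd₂, hw₂⟩
    refine ⟨fun f g => ?_, fun B hB hfin => ?_⟩
    · simp only [LinearMap.add_apply, hd₁ f g, hd₂ f g, dmul_add_left, dmul_add_right]
      abel
    · obtain ⟨i₁, hi₁, he₁⟩ := hw₁ B hB hfin
      obtain ⟨i₂, hi₂, he₂⟩ := hw₂ B hB hfin
      exact ⟨i₁ + i₂, Submodule.add_mem _ hi₁ hi₂, fun f b hb => by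
        simp [LinearMap.add_apply, he₁ f b hb, he₂ f b hb]⟩
  smul_mem' := by
    rintro c d ⟨hd, hw⟩
    refine ⟨fun f g => ?_, fun B hB hfin => ?_⟩
    · simp only [LinearMap.smul_apply, hd f g, dmul_smul_left, dmul_smul_right, smul_add]
    · obtain ⟨i, hi, he⟩ := hw B hB hfin
      exact ⟨c • i, Submodule.smul_mem _ c hi, fun f b hb => by
        simp [LinearMap.smul_apply, he f b hb]⟩
/-- Multiplication in the null extension `C = A* ⊕ A`. -/
noncomputable def cmul (Δ : A →ₗ[k] A ⊗[k] A) (x y : (A →ₗ[k] k) × A) :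
    (A →ₗ[k] k) × A :=
  (dmul Δ x.1 y.1, lact Δ x.1 y.2 + lact Δ y.1 x.2)

theorem lact_add_left (Δ : A →ₗ[k] A ⊗[k] A) (f₁ f₂ : (A →ₗ[k] k)) (a : A) :
    lact Δ (f₁ + f₂) a = lact Δ f₁ a + lact Δ f₂ a := by
  simp [lact, TensorProduct.map_add_right]

theorem lact_smul_left (Δ : A →ₗ[k] A ⊗[k] A) (c : k) (f : (A →ₗ[k] k)) (a : A) :
    lact Δ (c • f) a = c • lact Δ f a := by
  simp [lact, TensorProduct.map_smul_right]

/-- Right multiplication by an element of the null extension `C = A* ⊕ A`,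
as a linear operator on `C`. -/
noncomputable def RopC (Δ : A →ₗ[k] A ⊗[k] A) (x : (A →ₗ[k] k) × A) :
    ((A →ₗ[k] k) × A) →ₗ[k] ((A →ₗ[k] k) × A) where
  toFun y := cmul Δ y x
  map_add' y z := by
    simp only [cmul, Prod.fst_add, Prod.snd_add, Prod.mk_add_mk, dmul_add_left,
      lact_add_left, map_add]
    rw [Prod.mk.injEq]
    constructor
    · rfl
    · abel
  map_smul' c y := by
    simp only [cmul, Prod.smul_fst, Prod.smul_snd, Prod.smul_mk, dmul_smul_left,
      lact_smul_left, map_smul, RingHom.id_apply, smul_add]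

/-- The operator `[x,y] = x'y' - y'x'` on the null extension `C`
(right-operator convention: `z[x,y] = (zx)y - (zy)x`). -/
noncomputable def commC (Δ : A →ₗ[k] A ⊗[k] A) (x y : (A →ₗ[k] k) × A) :
    ((A →ₗ[k] k) × A) →ₗ[k] ((A →ₗ[k] k) × A) :=
  RopC Δ y ∘ₗ RopC Δ x - RopC Δ x ∘ₗ RopC Δ y

/-- The mixed commutator operator `[f,a]` on `C`, for `f ∈ A*` and `a ∈ A`. -/
noncomputable def commMixed (Δ : A →ₗ[k] A ⊗[k] A) (f : (A →ₗ[k] k)) (a : A) :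
    ((A →ₗ[k] k) × A) →ₗ[k] ((A →ₗ[k] k) × A) :=
  commC Δ (f, 0) (0, a)

/-- The space `[A*, A]`, spanned by the mixed commutators, inside `End(C)`. -/
noncomputable def CommAA (Δ : A →ₗ[k] A ⊗[k] A) :
    Submodule k (((A →ₗ[k] k) × A) →ₗ[k] ((A →ₗ[k] k) × A)) :=
  Submodule.span k {u | ∃ (f : (A →ₗ[k] k)) (a : A), u = commMixed Δ f a}

/-- Right multiplication in the null extension `D = V ⊕ B` of the dual algebra `(V, *)`
of the finite-dimensional subcoalgebra `B`. -/
noncomputable def RopD {k : Type*} [Field k] {A : Type*} [AddCommGroup A] [Module k A]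
    {B : Submodule k A} {V : Submodule k (A →ₗ[k] k)}
    (m : ↥V →ₗ[k] ↥V →ₗ[k] ↥V) (act : ↥V →ₗ[k] ↥B →ₗ[k] ↥B) (x : ↥V × ↥B) :
    (↥V × ↥B) →ₗ[k] (↥V × ↥B) :=
  LinearMap.prod ((m.flip x.1) ∘ₗ LinearMap.fst k ↥V ↥B)
    (((act.flip x.2) ∘ₗ LinearMap.fst k ↥V ↥B) + ((act x.1) ∘ₗ LinearMap.snd k ↥V ↥B))

/-- The operator `{x,y} = x'y' - y'x'` on `D = V ⊕ B` (right-operator convention). -/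
noncomputable def commDD {k : Type*} [Field k] {A : Type*} [AddCommGroup A] [Module k A]
    {B : Submodule k A} {V : Submodule k (A →ₗ[k] k)}
    (m : ↥V →ₗ[k] ↥V →ₗ[k] ↥V) (act : ↥V →ₗ[k] ↥B →ₗ[k] ↥B) (x y : ↥V × ↥B) :
    (↥V × ↥B) →ₗ[k] (↥V × ↥B) :=
  letI := V.addCommGroup
  RopD m act y ∘ₗ RopD m act x - RopD m act x ∘ₗ RopD m act y

/-- The inner derivation `{f,g}` of the algebra `(V, *)`. -/
noncomputable def commV {k : Type*} [Field k] {A : Type*} [AddCommGroup A] [Module k A]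
    {V : Submodule k (A →ₗ[k] k)} (m : ↥V →ₗ[k] ↥V →ₗ[k] ↥V) (f g : ↥V) :
    ↥V →ₗ[k] ↥V :=
  letI := V.addCommGroup
  (m.flip g) ∘ₗ (m.flip f) - (m.flip f) ∘ₗ (m.flip g)

section LinearAlgebra

variable {M N P : Type*} [AddCommMonoid M] [Module k M] [AddCommMonoid N] [Module k N]
  [AddCommMonoid P] [Module k P]

noncomputable def extendOperator (i : M →ₗ[k] N) (p : N →ₗ[k] M) :
    (M →ₗ[k] M) →ₗ[k] (N →ₗ[k] N) where
  toFun w := i ∘ₗ w ∘ₗ p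
  map_add' _ _ := by ext; simp
  map_smul' _ _ := by ext; simp

@[simp]
theorem extendOperator_apply (i : M →ₗ[k] N) (p : N →ₗ[k] M) (w : M →ₗ[k] M) (x : N) :
    extendOperator i p w x = i (w (p x)) := rfl

theorem extendOperator_injective {i : M →ₗ[k] N} {p : N →ₗ[k] M}
    (h : p ∘ₗ i = LinearMap.id) : Function.Injective (extendOperator i p) := by
  intro w w' hw
  ext x
  have := congrArg (fun v => p (v (i x))) hw
  simpa only [extendOperator_apply, ← LinearMap.comp_apply p, h, LinearMap.id_apply] using this

theorem Submodule.map_span_setOf_eq {α β : Type*} (F : M →ₗ[k] P) (G : N →ₗ[k] P)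
    (s : α → β → M) (t : α → β → N) (h : ∀ a b, F (s a b) = G (t a b)) :
    (span k {x | ∃ a b, x = s a b}).map F = (span k {y | ∃ a b, y = t a b}).map G := by
  simp only [Submodule.map_span]
  congr 1
  ext
  simp [h]

end LinearAlgebra

section Restriction

variable {M N : Type*} [AddCommMonoid M] [Module k M] [AddCommMonoid N] [Module k N]

theorem IsSubcoalgebra.map_apply_eq {Δ : A →ₗ[k] A ⊗[k] A} {B : Submodule k A}
    (hB : IsSubcoalgebra Δ B) {b : A} (hb : b ∈ B) {f f' : A →ₗ[k] M} {g g' : A →ₗ[k] N}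
    (hf : Set.EqOn f f' B) (hg : Set.EqOn g g' B) :
    TensorProduct.map f g (Δ b) = TensorProduct.map f' g' (Δ b) := by
  obtain ⟨t, ht⟩ := hB b hb
  have hfB : f ∘ₗ B.subtype = f' ∘ₗ B.subtype := LinearMap.ext fun x => hf x.2
  have hgB : g ∘ₗ B.subtype = g' ∘ₗ B.subtype := LinearMap.ext fun x => hg x.2
  rw [← ht, ← LinearMap.comp_apply, ← LinearMap.comp_apply, ← TensorProduct.map_comp,
    ← TensorProduct.map_comp, hfB, hgB]

theorem lact_apply_eq_of_eqOn {Δ : A →ₗ[k] A ⊗[k] A} {B : Submodule k A}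
    (hB : IsSubcoalgebra Δ B) {b : A} (hb : b ∈ B) {f f' : A →ₗ[k] k}
    (hf : Set.EqOn f f' B) : lact Δ f b = lact Δ f' b := by
  simp only [lact, LinearMap.coe_comp, Function.comp_apply,
    hB.map_apply_eq hb (Set.eqOn_refl _ _) hf]

theorem dmul_apply_eq_of_eqOn {Δ : A →ₗ[k] A ⊗[k] A} {B : Submodule k A}
    (hB : IsSubcoalgebra Δ B) {b : A} (hb : b ∈ B) {f f' : A →ₗ[k] k}
    (hf : Set.EqOn f f' B) (g : A →ₗ[k] k) : dmul Δ f g b = dmul Δ f' g b := by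
  simp only [dmul, LinearMap.coe_comp, Function.comp_apply,
    hB.map_apply_eq hb hf (Set.eqOn_refl _ _)]

theorem eqOn_projectionOnto_of_isCompl_dualAnnihilator {B : Submodule k A}
    {V : Submodule k (A →ₗ[k] k)} (hcompl : IsCompl V B.dualAnnihilator) (g : A →ₗ[k] k) :
    Set.EqOn (V.projectionOnto _ hcompl g : A →ₗ[k] k) g B := fun x hx => by
  have h := (Submodule.mem_dualAnnihilator _).mp (Submodule.sub_projection_mem hcompl g) x hx
  rw [LinearMap.sub_apply, sub_eq_zero] at h
  exact h.symm

end Restriction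

theorem lact_zero_left (Δ : A →ₗ[k] A ⊗[k] A) (a : A) : lact Δ 0 a = 0 := by
  simp [lact]

theorem commMixed_apply (Δ : A →ₗ[k] A ⊗[k] A) (f : A →ₗ[k] k) (a : A)
    (y : (A →ₗ[k] k) × A) :
    commMixed Δ f a y = (0, lact Δ (dmul Δ y.1 f) a - lact Δ f (lact Δ y.1 a)) := by
  simp [commMixed, commC, RopC, cmul, dmul_zero_left, dmul_zero_right, lact_zero_left]

theorem commD_apply (Δ : A →ₗ[k] A ⊗[k] A) (f g h : A →ₗ[k] k) :
    commD Δ f g h = dmul Δ (dmul Δ h f) g - dmul Δ (dmul Δ h g) f := rfl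

theorem commDD_apply {B : Submodule k A} {V : Submodule k (A →ₗ[k] k)}
    (m : V →ₗ[k] V →ₗ[k] V) (act : V →ₗ[k] B →ₗ[k] B) (f : V) (b : B) (y : V × B) :
    commDD m act (f, 0) (0, b) y = (0, act (m y.1 f) b - act f (act y.1 b)) := by
  let _ : AddCommGroup V := V.addCommGroup
  simp [commDD, RopD]

theorem commV_apply {V : Submodule k (A →ₗ[k] k)} (m : V →ₗ[k] V →ₗ[k] V) (f g h : V) :
    commV m f g h = m (m h f) g - m (m h g) f := rfl

theorem commV_apply_apply {Δ : A →ₗ[k] A ⊗[k] A} {B : Submodule k A}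
    (hB : IsSubcoalgebra Δ B) {V : Submodule k (A →ₗ[k] k)} {m : V →ₗ[k] V →ₗ[k] V}
    (hm : ∀ f g : V, ∀ b ∈ B, (m f g : A →ₗ[k] k) b = dmul Δ f g b)
    (f₀ g₀ f : V) {b : A} (hb : b ∈ B) :
    (commV m f₀ g₀ f : A →ₗ[k] k) b = commD Δ f₀ g₀ f b := by
  simp only [commV_apply, commD_apply, Submodule.coe_sub, LinearMap.sub_apply, hm _ _ b hb]
  rw [dmul_apply_eq_of_eqOn hB hb (fun x hx => hm f f₀ x hx),
    dmul_apply_eq_of_eqOn hB hb (fun x hx => hm f g₀ x hx)]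

theorem extendOperator_commDD {Δ : A →ₗ[k] A ⊗[k] A} {B : Submodule k A}
    (hB : IsSubcoalgebra Δ B) {V : Submodule k (A →ₗ[k] k)} {m : V →ₗ[k] V →ₗ[k] V}
    (hm : ∀ f g : V, ∀ b ∈ B, (m f g : A →ₗ[k] k) b = dmul Δ f g b)
    {act : V →ₗ[k] B →ₗ[k] B} (hact : ∀ (f : V) (b : B), (act f b : A) = lact Δ f b)
    {πV : (A →ₗ[k] k) →ₗ[k] V} (hπV : ∀ g, Set.EqOn (πV g : A →ₗ[k] k) g B)
    (πB : A →ₗ[k] B) (f : V) (b : B) :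
    extendOperator (V.subtype.prodMap B.subtype) (πV.prodMap πB) (commDD m act (f, 0) (0, b))
      = commMixed Δ f b := by
  refine LinearMap.ext fun ⟨g, a⟩ => ?_
  have hmul : Set.EqOn (m (πV g) f : A →ₗ[k] k) (dmul Δ g f) B := fun x hx => by
    rw [hm _ _ x hx, dmul_apply_eq_of_eqOn hB hx (hπV g)]
  simp only [extendOperator_apply, LinearMap.prodMap_apply, commDD_apply, commMixed_apply,
    Submodule.subtype_apply, ZeroMemClass.coe_zero, Submodule.coe_sub, hact,
    lact_apply_eq_of_eqOn hB b.2 hmul, lact_apply_eq_of_eqOn hB b.2 (hπV g)]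

theorem exists_mem_span_commV_apply_eq {Δ : A →ₗ[k] A ⊗[k] A} {B : Submodule k A}
    (hB : IsSubcoalgebra Δ B) {V : Submodule k (A →ₗ[k] k)} {m : V →ₗ[k] V →ₗ[k] V}
    (hm : ∀ f g : V, ∀ b ∈ B, (m f g : A →ₗ[k] k) b = dmul Δ f g b)
    {u : (A →ₗ[k] k) →ₗ[k] (A →ₗ[k] k)}
    (hu : u ∈ Submodule.span k {w | ∃ f g : V, w = commD Δ f g}) :
    ∃ i ∈ Submodule.span k {j | ∃ f g : V, j = commV m f g},
      ∀ (f : V) (b : B), (i f : A →ₗ[k] k) b = u f b := by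
  let restrictV : (V →ₗ[k] V) →ₗ[k] (V → B → k) :=
    { toFun i f b := (i f : A →ₗ[k] k) b, map_add' _ _ := rfl, map_smul' _ _ := rfl }
  let restrict : ((A →ₗ[k] k) →ₗ[k] (A →ₗ[k] k)) →ₗ[k] (V → B → k) :=
    { toFun u f b := u f b, map_add' _ _ := rfl, map_smul' _ _ := rfl }
  have hspan := Submodule.map_span_setOf_eq restrictV restrict (commV m)
    (fun f g => commD Δ f g) fun f₀ g₀ => funext₂ fun f b => commV_apply_apply hB hm f₀ g₀ f b.2
  obtain ⟨i, hi, hiu⟩ := hspan ▸ Submodule.mem_map_of_mem (f := restrict) hu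
  exact ⟨i, hi, fun f b => congrFun₂ hiu f b⟩

theorem prop5_general {k : Type*} [Field k] {A : Type*} [AddCommGroup A] [Module k A]
    (Δ : A →ₗ[k] A ⊗[k] A)
    (B : Submodule k A) (hB : IsSubcoalgebra Δ B)
    (V : Submodule k (A →ₗ[k] k)) (hcompl : IsCompl V B.dualAnnihilator)
    (m : ↥V →ₗ[k] ↥V →ₗ[k] ↥V)
    (hm : ∀ (f g : ↥V), ∀ b ∈ B, ((m f g : A →ₗ[k] k)) b = dmul Δ (f : A →ₗ[k] k) g b)
    (act : ↥V →ₗ[k] ↥B →ₗ[k] ↥B)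
    (hact : ∀ (f : ↥V) (b : ↥B), ((act f b : A)) = lact Δ (f : A →ₗ[k] k) (b : A))
    (φ : ↥(WIntDer Δ) →ₗ[k] (↥(CommAA Δ) →ₗ[k] k))
    (hφ : ∀ (e : ↥(WIntDer Δ)) (f : A →ₗ[k] k) (a : A) (h : commMixed Δ f a ∈ CommAA Δ),
      φ e ⟨commMixed Δ f a, h⟩ = (e : ((A →ₗ[k] k) →ₗ[k] (A →ₗ[k] k))) f a) :
    (∀ (n : ℕ) (f : Fin n → ↥V) (b : Fin n → ↥B),
      (∑ i, commDD m act (f i, 0) (0, b i)) = 0 ↔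
      (∑ i, commMixed Δ ((f i : A →ₗ[k] k)) ((b i : A))) = 0) ∧
    (∃ e : ↥(Submodule.span k {u | ∃ (f : ↥V) (b : ↥B), u = commDD m act (f, 0) (0, b)})
        ≃ₗ[k] ↥(Submodule.span k
          {u | ∃ (f : ↥V) (b : ↥B), u = commMixed Δ ((f : A →ₗ[k] k)) ((b : A))}),
      ∀ (f : ↥V) (b : ↥B)
        (h : commDD m act (f, 0) (0, b) ∈
          Submodule.span k {u | ∃ (f : ↥V) (b : ↥B), u = commDD m act (f, 0) (0, b)})
        (h' : commMixed Δ ((f : A →ₗ[k] k)) ((b : A)) ∈ Submodule.span k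
          {u | ∃ (f : ↥V) (b : ↥B), u = commMixed Δ ((f : A →ₗ[k] k)) ((b : A))}),
        e ⟨commDD m act (f, 0) (0, b), h⟩
          = ⟨commMixed Δ ((f : A →ₗ[k] k)) ((b : A)), h'⟩) ∧
    (∀ (u : (A →ₗ[k] k) →ₗ[k] (A →ₗ[k] k)),
      u ∈ Submodule.span k
        {w | ∃ (f g : ↥V), w = commD Δ ((f : A →ₗ[k] k)) ((g : A →ₗ[k] k))} →
      ∀ hu : u ∈ WIntDer Δ,
      ∃ (w : ↥(CommAA Δ) →ₗ[k] k) (i : ↥V →ₗ[k] ↥V),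
        i ∈ Submodule.span k {j | ∃ (f g : ↥V), j = commV m f g} ∧
        (∀ (f : ↥V) (b : ↥B) (h : commMixed Δ ((f : A →ₗ[k] k)) ((b : A)) ∈ CommAA Δ),
          w ⟨commMixed Δ ((f : A →ₗ[k] k)) ((b : A)), h⟩ = ((i f : A →ₗ[k] k)) (b : A)) ∧
        (∀ v : ↥(CommAA Δ),
          (v : ((A →ₗ[k] k) × A) →ₗ[k] ((A →ₗ[k] k) × A)) ∈ Submodule.span k
            {u' | ∃ (f : ↥V) (b : ↥B), u' = commMixed Δ ((f : A →ₗ[k] k)) ((b : A))} →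
          φ ⟨u, hu⟩ v = w v)) := by
  obtain ⟨B', hB'⟩ := Submodule.exists_isCompl B
  set E := extendOperator (V.subtype.prodMap B.subtype)
    ((V.projectionOnto _ hcompl).prodMap (B.projectionOnto B' hB'))
  have hE : ∀ (f : V) (b : B), E (commDD m act (f, 0) (0, b)) = commMixed Δ f b :=
    extendOperator_commDD hB hm hact (eqOn_projectionOnto_of_isCompl_dualAnnihilator hcompl) _
  have hE_inj : Function.Injective E := extendOperator_injective (by ext <;> simp)
  refine ⟨fun n f b => ?_, ?_, fun u hu hW => ?_⟩
  · rw [← map_eq_zero_iff E hE_inj, map_sum]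
    simp only [hE]
  · have hspan := Submodule.map_span_setOf_eq E LinearMap.id _ _ hE
    rw [Submodule.map_id] at hspan
    exact ⟨(Submodule.equivMapOfInjective E hE_inj _).trans (LinearEquiv.ofEq _ _ hspan),
      fun f b _ _ => Subtype.ext (hE f b)⟩
  · obtain ⟨i, hi, hiu⟩ := exists_mem_span_commV_apply_eq hB hm hu
    exact ⟨φ ⟨u, hW⟩, i, hi, fun f b h => by rw [hφ, hiu], fun _ _ => rfl⟩

/-- **Proposition 5.** Let `B` be a finite-dimensional subcoalgebra, `A* = V ⊕ B^⊥`,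
`(V, *)` the dual algebra of `⟨B, Δ|_B⟩` (Proposition 4) acting on `B`, and
`D = V ⊕ B` its null extension with commutator operators `{x,y}`.  Then
`Σ{fᵢ,bᵢ} = 0 ↔ Σ[fᵢ,bᵢ] = 0`, so `{V,B} ≅ [V,B]`; and, identifying `{V,V}` with
linear functionals on `[V,B]` (via Proposition 3's embedding `φ` into `([A*,A])*`),
`[V,V] ⊆ [V,B]* + [V,B]^⊥`. -/
theorem prop5 {k : Type*} [Field k] {A : Type*} [AddCommGroup A] [Module k A]
    (h2 : (2 : k) ≠ 0) (Δ : A →ₗ[k] A ⊗[k] A) (hJ : IsJordanCoalgebra Δ)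
    (one : A →ₗ[k] k) (hone : ∀ f, dmul Δ one f = f ∧ dmul Δ f one = f)
    (B : Submodule k A) (hB : IsSubcoalgebra Δ B) (hBfin : FiniteDimensional k B)
    (V : Submodule k (A →ₗ[k] k)) (hcompl : IsCompl V B.dualAnnihilator)
    (m : ↥V →ₗ[k] ↥V →ₗ[k] ↥V)
    (hm : ∀ (f g : ↥V), ∀ b ∈ B, ((m f g : A →ₗ[k] k)) b = dmul Δ (f : A →ₗ[k] k) g b)
    (act : ↥V →ₗ[k] ↥B →ₗ[k] ↥B)
    (hact : ∀ (f : ↥V) (b : ↥B), ((act f b : A)) = lact Δ (f : A →ₗ[k] k) (b : A))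
    (φ : ↥(WIntDer Δ) →ₗ[k] (↥(CommAA Δ) →ₗ[k] k))
    (hφ : ∀ (e : ↥(WIntDer Δ)) (f : A →ₗ[k] k) (a : A) (h : commMixed Δ f a ∈ CommAA Δ),
      φ e ⟨commMixed Δ f a, h⟩ = (e : ((A →ₗ[k] k) →ₗ[k] (A →ₗ[k] k))) f a)
    (hφbij : Function.Bijective φ) :
    (∀ (n : ℕ) (f : Fin n → ↥V) (b : Fin n → ↥B),
      (∑ i, commDD m act (f i, 0) (0, b i)) = 0 ↔
      (∑ i, commMixed Δ ((f i : A →ₗ[k] k)) ((b i : A))) = 0) ∧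
    (∃ e : ↥(Submodule.span k {u | ∃ (f : ↥V) (b : ↥B), u = commDD m act (f, 0) (0, b)})
        ≃ₗ[k] ↥(Submodule.span k
          {u | ∃ (f : ↥V) (b : ↥B), u = commMixed Δ ((f : A →ₗ[k] k)) ((b : A))}),
      ∀ (f : ↥V) (b : ↥B)
        (h : commDD m act (f, 0) (0, b) ∈
          Submodule.span k {u | ∃ (f : ↥V) (b : ↥B), u = commDD m act (f, 0) (0, b)})
        (h' : commMixed Δ ((f : A →ₗ[k] k)) ((b : A)) ∈ Submodule.span k
          {u | ∃ (f : ↥V) (b : ↥B), u = commMixed Δ ((f : A →ₗ[k] k)) ((b : A))}),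
        e ⟨commDD m act (f, 0) (0, b), h⟩
          = ⟨commMixed Δ ((f : A →ₗ[k] k)) ((b : A)), h'⟩) ∧
    (∀ (u : (A →ₗ[k] k) →ₗ[k] (A →ₗ[k] k)),
      u ∈ Submodule.span k
        {w | ∃ (f g : ↥V), w = commD Δ ((f : A →ₗ[k] k)) ((g : A →ₗ[k] k))} →
      ∀ hu : u ∈ WIntDer Δ,
      ∃ (w : ↥(CommAA Δ) →ₗ[k] k) (i : ↥V →ₗ[k] ↥V),
        i ∈ Submodule.span k {j | ∃ (f g : ↥V), j = commV m f g} ∧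
        (∀ (f : ↥V) (b : ↥B) (h : commMixed Δ ((f : A →ₗ[k] k)) ((b : A)) ∈ CommAA Δ),
          w ⟨commMixed Δ ((f : A →ₗ[k] k)) ((b : A)), h⟩ = ((i f : A →ₗ[k] k)) (b : A)) ∧
        (∀ v : ↥(CommAA Δ),
          (v : ((A →ₗ[k] k) × A) →ₗ[k] ((A →ₗ[k] k) × A)) ∈ Submodule.span k
            {u' | ∃ (f : ↥V) (b : ↥B), u' = commMixed Δ ((f : A →ₗ[k] k)) ((b : A))} →
          φ ⟨u, hu⟩ v = w v)) :=
  prop5_general Δ B hB V hcompl m hm act hact φ hφ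
end

section
/- Let ⟨A, Δ⟩ be a Jordan coalgebra over a field k of characteristic not 2 whose dual algebra A* is unital. Let B be a finite-dimensional subcoalgebra of ⟨A, Δ⟩ and set L = B ⊕ B' ⊕ [A*, B] ⊕ B̄ ⊆ L(A). Then there exists a linear map Δ_B : L → L(A) ⊗ L(A) such that for all f, g ∈ L(A*) and l ∈ L, ⟨[f,g], l⟩ = ⟨ρ(f ⊗ g), Δ_B(l)⟩, where ρ is the standard embedding of L(A*) ⊗ L(A*) into (L(A) ⊗ L(A))*. -/
open TensorProduct

variable {k : Type*} [Field k] {A : Type*} [AddCommGroup A] [Module k A]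

/-- The `AddCommGroup` structure of the submodule `[A*, A]` (found automatically by the
older Lean; stated explicitly for the current one). -/
noncomputable instance CommAA.instAddCommGroup (Δ : A →ₗ[k] A ⊗[k] A) :
    AddCommGroup ↥(CommAA Δ) :=
  @Submodule.addCommGroup k (((A →ₗ[k] k) × A) →ₗ[k] ((A →ₗ[k] k) × A)) _
    LinearMap.addCommGroup LinearMap.module (CommAA Δ)

/-- The Kantor–Koecher–Tits bracket on `L(A*) = A* ⊕ (A*)' ⊕ WIntDer(A*) ⊕ Ā*`
(the third component is taken in `End(A*)`; for elements of `L(A*)` it lies in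
`WIntDer(A*)`).  An element `(a, g, d, b)` represents `a + g' + d + b̄`. -/
noncomputable def bracketStar (Δ : A →ₗ[k] A ⊗[k] A)
    (l₁ l₂ : (A →ₗ[k] k) × (A →ₗ[k] k) × ((A →ₗ[k] k) →ₗ[k] (A →ₗ[k] k)) × (A →ₗ[k] k)) :
    (A →ₗ[k] k) × (A →ₗ[k] k) × ((A →ₗ[k] k) →ₗ[k] (A →ₗ[k] k)) × (A →ₗ[k] k) :=
  (dmul Δ l₁.1 l₂.2.1 + l₂.2.2.1 l₁.1 - dmul Δ l₂.1 l₁.2.1 - l₁.2.2.1 l₂.1,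
   dmul Δ l₁.1 l₂.2.2.2 - dmul Δ l₂.1 l₁.2.2.2 + l₂.2.2.1 l₁.2.1 - l₁.2.2.1 l₂.2.1,
   - commD Δ l₁.1 l₂.2.2.2 + commD Δ l₂.1 l₁.2.2.2 + commD Δ l₁.2.1 l₂.2.1
     + (l₂.2.2.1 ∘ₗ l₁.2.2.1 - l₁.2.2.1 ∘ₗ l₂.2.2.1),
   - dmul Δ l₁.2.2.2 l₂.2.1 + l₂.2.2.1 l₁.2.2.2 + dmul Δ l₂.2.2.2 l₁.2.1
     - l₁.2.2.1 l₂.2.2.2)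

/-- The involution `ε(a + c' + d + b̄) = b - c' + d + ā` on `L(A*)`. -/
def epsStar
    (l : (A →ₗ[k] k) × (A →ₗ[k] k) × ((A →ₗ[k] k) →ₗ[k] (A →ₗ[k] k)) × (A →ₗ[k] k)) :
    (A →ₗ[k] k) × (A →ₗ[k] k) × ((A →ₗ[k] k) →ₗ[k] (A →ₗ[k] k)) × (A →ₗ[k] k) :=
  (l.2.2.2, - l.2.1, l.2.2.1, l.1)

/-- The module action `[l, l*]` of `L(A*)` on `L(A) = A ⊕ A' ⊕ [A*,A] ⊕ Ā`.
`Dex d` is the canonical extension of a weakly inner derivation `d` to `A`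
(Proposition 2), passed as a parameter.  An element `(a, b, v, c)` of `L(A)`
represents `a + b' + v + c̄`. -/
noncomputable def actLL (Δ : A →ₗ[k] A ⊗[k] A)
    (Dex : ((A →ₗ[k] k) →ₗ[k] (A →ₗ[k] k)) → (A →ₗ[k] A))
    (l : A × A × (((A →ₗ[k] k) × A) →ₗ[k] ((A →ₗ[k] k) × A)) × A)
    (ls : (A →ₗ[k] k) × (A →ₗ[k] k) × ((A →ₗ[k] k) →ₗ[k] (A →ₗ[k] k)) × (A →ₗ[k] k)) :
    A × A × (((A →ₗ[k] k) × A) →ₗ[k] ((A →ₗ[k] k) × A)) × A :=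
  (lact Δ ls.2.1 l.1 + Dex ls.2.2.1 l.1 - lact Δ ls.1 l.2.1 - (l.2.2.1 (ls.1, 0)).2,
   ract Δ ls.2.2.2 l.1 - lact Δ ls.1 l.2.2.2 + Dex ls.2.2.1 l.2.1,
   commMixed Δ ls.2.2.2 l.1 + commMixed Δ ls.1 l.2.2.2 - commMixed Δ ls.2.1 l.2.1
     + (RopC Δ (ls.2.1, 0) ∘ₗ l.2.2.1 - l.2.2.1 ∘ₗ RopC Δ (ls.2.1, 0))
     + ((LinearMap.prodMap ls.2.2.1 (Dex ls.2.2.1)) ∘ₗ l.2.2.1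
        - l.2.2.1 ∘ₗ (LinearMap.prodMap ls.2.2.1 (Dex ls.2.2.1))),
   - lact Δ ls.2.1 l.2.2.2 + Dex ls.2.2.1 l.2.2.2 + lact Δ ls.2.2.2 l.2.1
     - (l.2.2.1 (ls.2.2.2, 0)).2)

/-- The natural pairing between `L(A*)` and `L(A)`, via the identification
`WIntDer(A*) ≅ ([A*,A])*` given by `φ` (Lemma 2). -/
noncomputable def pairSF (Δ : A →ₗ[k] A ⊗[k] A)
    (φ : ↥(WIntDer Δ) →ₗ[k] (↥(CommAA Δ) →ₗ[k] k))
    (ls : (A →ₗ[k] k) × (A →ₗ[k] k) × ((A →ₗ[k] k) →ₗ[k] (A →ₗ[k] k)) × (A →ₗ[k] k))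
    (l : A × A × (((A →ₗ[k] k) × A) →ₗ[k] ((A →ₗ[k] k) × A)) × A)
    (hd : ls.2.2.1 ∈ WIntDer Δ) (hv : l.2.2.1 ∈ CommAA Δ) : k :=
  ls.1 l.1 + ls.2.1 l.2.1 + φ ⟨ls.2.2.1, hd⟩ ⟨l.2.2.1, hv⟩ + ls.2.2.2 l.2.2.2

/-- The space `L(A) = A ⊕ A' ⊕ [A*,A] ⊕ Ā` underlying the Lie coalgebra of Theorem 1.
An element `(a, b, v, c)` represents `a + b' + v + c̄`. -/
@[reducible] def LKKT (Δ : A →ₗ[k] A ⊗[k] A) : Type _ :=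
  A × A × ↥(CommAA Δ) × A

/-- An element of `L(A*) = A* ⊕ (A*)' ⊕ WIntDer(A*) ⊕ Ā*` as a linear functional on
`L(A)`, via the identification `WIntDer(A*) ≅ ([A*,A])*` given by `φ` (Lemma 2). -/
noncomputable def toFunc (Δ : A →ₗ[k] A ⊗[k] A)
    (φ : ↥(WIntDer Δ) →ₗ[k] (↥(CommAA Δ) →ₗ[k] k))
    (f : (A →ₗ[k] k) × (A →ₗ[k] k) × ((A →ₗ[k] k) →ₗ[k] (A →ₗ[k] k)) × (A →ₗ[k] k))
    (hf : f.2.2.1 ∈ WIntDer Δ) : LKKT Δ →ₗ[k] k :=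
  f.1 ∘ₗ LinearMap.fst k A (A × (↥(CommAA Δ) × A)) +
  f.2.1 ∘ₗ (LinearMap.fst k A (↥(CommAA Δ) × A)
      ∘ₗ LinearMap.snd k A (A × (↥(CommAA Δ) × A))) +
  (φ ⟨f.2.2.1, hf⟩) ∘ₗ (LinearMap.fst k ↥(CommAA Δ) A
      ∘ₗ LinearMap.snd k A (↥(CommAA Δ) × A)
      ∘ₗ LinearMap.snd k A (A × (↥(CommAA Δ) × A))) +
  f.2.2.2 ∘ₗ (LinearMap.snd k ↥(CommAA Δ) A
      ∘ₗ LinearMap.snd k A (↥(CommAA Δ) × A)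
      ∘ₗ LinearMap.snd k A (A × (↥(CommAA Δ) × A)))

/-- The standard embedding `ρ` on a pair of functionals: `ρ(F ⊗ G)` as a functional
on `M ⊗ M`. -/
noncomputable def pairT {M : Type*} [AddCommGroup M] [Module k M]
    (F G : M →ₗ[k] k) : (M ⊗[k] M) →ₗ[k] k :=
  (TensorProduct.lid k k).toLinearMap ∘ₗ TensorProduct.map F G

/-- The map `π(a + b' + v + c̄) = c - b' + v + ā` on `L(A)`. -/
def piL (Δ : A →ₗ[k] A ⊗[k] A) (l : LKKT Δ) : LKKT Δ :=
  (l.2.2.2, - l.2.1, l.2.2.1, l.1)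

/-- The natural inclusion `A → L(A)`. -/
noncomputable def inclA (Δ : A →ₗ[k] A ⊗[k] A) : A →ₗ[k] LKKT Δ :=
  LinearMap.prod LinearMap.id (LinearMap.prod 0 (LinearMap.prod 0 0))


/-!
The pairing `⟨[f,g], l⟩` is bilinear in `(f, g)`, so for each kind of generator `l` of `L` it
suffices to write it as a finite sum `Σ ⟨f, x_j⟩⟨g, y_j⟩` with `x_j, y_j ∈ L(A)`. Products in `A*`
evaluated at `a` are read off from `Δ(a)`. For a derivation term `e(u)(a)` with `e` weakly inner
and `a ∈ B`, finite-dimensionality makes `e(·)(a)` the evaluation at a point of `B`, so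
`e(u)(a) = Σᵢ e(cᵢ)(a) u(bᵢ)` for a dual pair `(bᵢ, cᵢ)` spanning `B`, and
`e(cᵢ)(a) = ⟨e, [cᵢ, a]⟩` is a pairing with an element of `[A*, B]`. Finally, the pairs `(x, t)`
with `⟨[f,g], x⟩ = ⟨ρ(f ⊗ g), t⟩` form a subspace, so values chosen on a basis of `L` extend to
a linear `Δ_B`.
-/

theorem Submodule.exists_linearMap_mem_of_le_map_fst {K M N : Type*} [Field K] [AddCommGroup M]
    [Module K M] [AddCommGroup N] [Module K N] (R : Submodule K (M × N)) (S : Submodule K M)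
    (hS : S ≤ R.map (LinearMap.fst K M N)) :
    ∃ F : S →ₗ[K] N, ∀ x : S, ((x : M), F x) ∈ R := by
  let bas := Module.Basis.ofVectorSpace K S
  have hval : ∀ i, ∃ t : N, ((bas i : M), t) ∈ R := fun i => by
    obtain ⟨⟨x, t⟩, hxt, hx⟩ := hS (bas i).2
    exact ⟨t, by simpa [← hx] using hxt⟩
  choose t ht using hval
  refine ⟨bas.constr K t, ?_⟩
  suffices ⊤ ≤ R.comap (S.subtype.prod (bas.constr K t)) from fun x => this Submodule.mem_top
  rw [← bas.span_eq, Submodule.span_le]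
  rintro _ ⟨i, rfl⟩
  simpa using ht i

theorem Submodule.exists_sum_smul_eq_of_finiteDimensional {K V : Type*} [DivisionRing K]
    [AddCommGroup V] [Module K V] (B : Submodule K V) [FiniteDimensional K B] :
    ∃ (n : ℕ) (b : Fin n → V) (c : Fin n → V →ₗ[K] K), ∀ z ∈ B, ∑ i, c i z • b i = z := by
  obtain ⟨π, hπ⟩ := LinearMap.exists_leftInverse_of_injective B.subtype B.ker_subtype
  let bs := Module.finBasis K B
  refine ⟨_, fun i => bs i, fun i => bs.coord i ∘ₗ π, fun z hz => ?_⟩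
  have hπz : π z = ⟨z, hz⟩ := LinearMap.congr_fun hπ ⟨z, hz⟩
  calc ∑ i, (bs.coord i ∘ₗ π) z • (bs i : V) = B.subtype (∑ i, bs.repr ⟨z, hz⟩ i • bs i) := by
        simp only [LinearMap.comp_apply, hπz, Module.Basis.coord_apply, map_sum, map_smul,
          Submodule.subtype_apply]
    _ = z := by rw [bs.sum_repr]; rfl

section DualAlgebra

variable (Δ : A →ₗ[k] A ⊗[k] A)

theorem dmul_apply_eq_apply_lact (f u : A →ₗ[k] k) (a : A) :
    dmul Δ f u a = f (lact Δ u a) := by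
  simp only [dmul, lact, LinearMap.comp_apply, LinearEquiv.coe_coe]
  induction Δ a using TensorProduct.induction_on with
  | zero => simp
  | tmul x y => simp [mul_comm]
  | add x y hx hy => simp only [map_add, hx, hy]

theorem comp_ract_eq_dmul (h u : A →ₗ[k] k) : u ∘ₗ ract Δ h = dmul Δ h u := by
  ext a
  simp only [dmul, ract, LinearMap.comp_apply, LinearEquiv.coe_coe]
  induction Δ a using TensorProduct.induction_on with
  | zero => simp
  | tmul x y => simp
  | add x y hx hy => simp only [map_add, hx, hy]

theorem commD_apply_apply (u w f : A →ₗ[k] k) (a : A) :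
    commD Δ u w f a = f (lact Δ u (lact Δ w a) - lact Δ w (lact Δ u a)) := by
  simp only [commD, LinearMap.sub_apply, LinearMap.comp_apply, Rop, LinearMap.coe_mk,
    AddHom.coe_mk, dmul_apply_eq_apply_lact, map_sub]

variable {Δ} {B : Submodule k A}

theorem IsSubcoalgebra.lact_mem (hB : IsSubcoalgebra Δ B) (u : A →ₗ[k] k) {a : A}
    (ha : a ∈ B) : lact Δ u a ∈ B := by
  obtain ⟨t, ht⟩ := hB a ha
  simp only [lact, LinearMap.comp_apply, LinearEquiv.coe_coe, ← ht]
  clear ht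
  induction t using TensorProduct.induction_on with
  | zero => simp
  | tmul x y => simpa using B.smul_mem _ x.2
  | add x y hx hy => simpa only [map_add] using B.add_mem hx hy

/-- `[u,w]` acts at `a` as evaluation at `u·(w·a) - w·(u·a)`, which lies in `B`. -/
theorem IsSubcoalgebra.exists_mem_apply_eq_of_mem_IntDer (hB : IsSubcoalgebra Δ B)
    {i : (A →ₗ[k] k) →ₗ[k] (A →ₗ[k] k)} (hi : i ∈ IntDer Δ) {a : A} (ha : a ∈ B) :
    ∃ z ∈ B, ∀ f : A →ₗ[k] k, i f a = f z := by
  induction hi using Submodule.span_induction with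
  | mem x hx =>
    obtain ⟨u, w, rfl⟩ := hx
    exact ⟨_, B.sub_mem (hB.lact_mem u (hB.lact_mem w ha)) (hB.lact_mem w (hB.lact_mem u ha)),
      fun f => commD_apply_apply Δ u w f a⟩
  | zero => exact ⟨0, B.zero_mem, by simp⟩
  | add x y _ _ hx hy =>
    obtain ⟨z₁, hz₁, h₁⟩ := hx
    obtain ⟨z₂, hz₂, h₂⟩ := hy
    exact ⟨z₁ + z₂, B.add_mem hz₁ hz₂, by simp [h₁, h₂]⟩
  | smul c x _ hx =>
    obtain ⟨z, hz, h⟩ := hx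
    exact ⟨c • z, B.smul_mem c hz, by simp [h]⟩

theorem IsSubcoalgebra.exists_mem_apply_eq_of_mem_WIntDer (hB : IsSubcoalgebra Δ B)
    (hBfin : FiniteDimensional k B) {e : (A →ₗ[k] k) →ₗ[k] (A →ₗ[k] k)} (he : e ∈ WIntDer Δ)
    {a : A} (ha : a ∈ B) : ∃ z ∈ B, ∀ f : A →ₗ[k] k, e f a = f z := by
  obtain ⟨i, hi, hei⟩ := he.2 B hB hBfin
  obtain ⟨z, hz, hiz⟩ := hB.exists_mem_apply_eq_of_mem_IntDer hi ha
  exact ⟨z, hz, fun f => (hei f a ha).trans (hiz f)⟩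

theorem IsSubcoalgebra.WIntDer_apply_eq_sum (hB : IsSubcoalgebra Δ B)
    (hBfin : FiniteDimensional k B) {n : ℕ} {b : Fin n → A} {c : Fin n → A →ₗ[k] k}
    (hbc : ∀ z ∈ B, ∑ i, c i z • b i = z) {e : (A →ₗ[k] k) →ₗ[k] (A →ₗ[k] k)}
    (he : e ∈ WIntDer Δ) {a : A} (ha : a ∈ B) (f : A →ₗ[k] k) :
    e f a = ∑ i, e (c i) a * f (b i) := by
  obtain ⟨z, hz, hez⟩ := hB.exists_mem_apply_eq_of_mem_WIntDer hBfin he ha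
  simp only [hez]
  conv_lhs => rw [← hbc z hz]
  simp [mul_comm]

end DualAlgebra

theorem pairT_tmul {M : Type*} [AddCommGroup M] [Module k M] (F G : M →ₗ[k] k) (x y : M) :
    pairT F G (x ⊗ₜ[k] y) = F x * G y := by
  simp [pairT]

theorem pairT_map {M N : Type*} [AddCommGroup M] [Module k M] [AddCommGroup N] [Module k N]
    (F G : M →ₗ[k] k) (p q : N →ₗ[k] M) (t : N ⊗[k] N) :
    pairT F G (TensorProduct.map p q t) = pairT (F ∘ₗ p) (G ∘ₗ q) t := by
  simp only [pairT, LinearMap.comp_apply, ← LinearMap.comp_apply (TensorProduct.map F G),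
    ← TensorProduct.map_comp]

theorem pairT_comm {M : Type*} [AddCommGroup M] [Module k M] (F G : M →ₗ[k] k)
    (t : M ⊗[k] M) : pairT F G (TensorProduct.comm k M M t) = pairT G F t := by
  induction t using TensorProduct.induction_on with
  | zero => simp
  | tmul x y => simp [pairT_tmul, mul_comm]
  | add x y hx hy => simp only [map_add, hx, hy]

abbrev LKKTDual (k : Type*) [Field k] (A : Type*) [AddCommGroup A] [Module k A] : Type _ :=
  (A →ₗ[k] k) × (A →ₗ[k] k) × ((A →ₗ[k] k) →ₗ[k] (A →ₗ[k] k)) × (A →ₗ[k] k)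

section KKT

variable (Δ : A →ₗ[k] A ⊗[k] A)

noncomputable def inclPrime : A →ₗ[k] LKKT Δ :=
  LinearMap.prod 0 (LinearMap.prod LinearMap.id (LinearMap.prod 0 0))

noncomputable def inclComm : ↥(CommAA Δ) →ₗ[k] LKKT Δ :=
  LinearMap.prod 0 (LinearMap.prod 0 (LinearMap.prod LinearMap.id 0))

noncomputable def inclBar : A →ₗ[k] LKKT Δ :=
  LinearMap.prod 0 (LinearMap.prod 0 (LinearMap.prod 0 LinearMap.id))

theorem eq_inclA_add_inclPrime_add_inclComm_add_inclBar (x : LKKT Δ) :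
    x = inclA Δ x.1 + inclPrime Δ x.2.1 + inclComm Δ x.2.2.1 + inclBar Δ x.2.2.2 := by
  simp [inclA, inclPrime, inclComm, inclBar]

noncomputable def CommAA.mixed (f : A →ₗ[k] k) (a : A) : ↥(CommAA Δ) :=
  ⟨commMixed Δ f a, Submodule.subset_span ⟨f, a, rfl⟩⟩

def IsMixedPairing (φ : ↥(WIntDer Δ) →ₗ[k] (↥(CommAA Δ) →ₗ[k] k)) : Prop :=
  ∀ (e : ↥(WIntDer Δ)) (f : A →ₗ[k] k) (a : A),
    φ e (CommAA.mixed Δ f a) = (e : (A →ₗ[k] k) →ₗ[k] (A →ₗ[k] k)) f a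

variable {Δ} {φ : ↥(WIntDer Δ) →ₗ[k] (↥(CommAA Δ) →ₗ[k] k)} (f : LKKTDual k A)
  (hf : f.2.2.1 ∈ WIntDer Δ)

theorem toFunc_comp_inclA : toFunc Δ φ f hf ∘ₗ inclA Δ = f.1 := by
  ext; simp [toFunc, inclA]

theorem toFunc_comp_inclPrime : toFunc Δ φ f hf ∘ₗ inclPrime Δ = f.2.1 := by
  ext; simp [toFunc, inclPrime]

theorem toFunc_comp_inclBar : toFunc Δ φ f hf ∘ₗ inclBar Δ = f.2.2.2 := by
  ext; simp [toFunc, inclBar]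

theorem toFunc_inclComm (w : ↥(CommAA Δ)) :
    toFunc Δ φ f hf (inclComm Δ w) = φ ⟨f.2.2.1, hf⟩ w := by
  simp [toFunc, inclComm]

variable (Δ φ) in
noncomputable def cobracketGraph : Submodule k (LKKT Δ × (LKKT Δ ⊗[k] LKKT Δ)) where
  carrier := {p | ∀ (f g : LKKTDual k A) (hf : f.2.2.1 ∈ WIntDer Δ) (hg : g.2.2.1 ∈ WIntDer Δ)
    (hbr : (bracketStar Δ f g).2.2.1 ∈ WIntDer Δ),
    toFunc Δ φ (bracketStar Δ f g) hbr p.1 = pairT (toFunc Δ φ f hf) (toFunc Δ φ g hg) p.2}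
  add_mem' hp hq f g hf hg hbr := by
    simp only [Prod.fst_add, Prod.snd_add, map_add, hp f g hf hg hbr, hq f g hf hg hbr]
  zero_mem' := by simp
  smul_mem' c p hp f g hf hg hbr := by
    simp only [Prod.smul_fst, Prod.smul_snd, map_smul, hp f g hf hg hbr]

/-- The bracket is antisymmetric, so it suffices to represent one ordered half `H` of it. -/
theorem sub_comm_mem_cobracketGraph {x : LKKT Δ} {X : LKKT Δ ⊗[k] LKKT Δ}
    (H : LKKTDual k A → LKKTDual k A → k)
    (hX : ∀ (f g : LKKTDual k A) (hf : f.2.2.1 ∈ WIntDer Δ) (hg : g.2.2.1 ∈ WIntDer Δ),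
      pairT (toFunc Δ φ f hf) (toFunc Δ φ g hg) X = H f g)
    (hx : ∀ (f g : LKKTDual k A) (hbr : (bracketStar Δ f g).2.2.1 ∈ WIntDer Δ),
      toFunc Δ φ (bracketStar Δ f g) hbr x = H f g - H g f) :
    (x, X - TensorProduct.comm k _ _ X) ∈ cobracketGraph Δ φ := fun f g hf hg hbr => by
  rw [hx, map_sub, pairT_comm, hX, hX]

variable (Δ) in
noncomputable def derivTensor {n : ℕ} (c : Fin n → A →ₗ[k] k) (v : Fin n → LKKT Δ) (a : A) :
    LKKT Δ ⊗[k] LKKT Δ :=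
  ∑ i, v i ⊗ₜ[k] inclComm Δ (CommAA.mixed Δ (c i) a)

theorem pairT_derivTensor (hφ : IsMixedPairing Δ φ) {n : ℕ} {b : Fin n → A}
    {c : Fin n → A →ₗ[k] k} {a : A}
    (hexp : ∀ e ∈ WIntDer Δ, ∀ u, e u a = ∑ i, e (c i) a * u (b i))
    {F : LKKT Δ →ₗ[k] k} {v : Fin n → LKKT Δ} {u : A →ₗ[k] k} (hu : ∀ i, F (v i) = u (b i)) :
    pairT F (toFunc Δ φ f hf) (derivTensor Δ c v a) = f.2.2.1 u a := by
  rw [hexp _ hf u]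
  simp only [derivTensor, map_sum, pairT_tmul, toFunc_inclComm, hu]
  exact Finset.sum_congr rfl fun i _ => by rw [hφ, mul_comm]

end KKT

section Generators

variable {Δ : A →ₗ[k] A ⊗[k] A} {φ : ↥(WIntDer Δ) →ₗ[k] (↥(CommAA Δ) →ₗ[k] k)} {n : ℕ}
  {b : Fin n → A} {c : Fin n → A →ₗ[k] k} {a : A}

theorem exists_inclA_mem_cobracketGraph (hφ : IsMixedPairing Δ φ)
    (hexp : ∀ e ∈ WIntDer Δ, ∀ u, e u a = ∑ i, e (c i) a * u (b i)) :
    ∃ t, (inclA Δ a, t) ∈ cobracketGraph Δ φ := by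
  refine ⟨_, sub_comm_mem_cobracketGraph
    (X := TensorProduct.map (inclA Δ) (inclPrime Δ) (Δ a) + derivTensor Δ c (inclA Δ ∘ b) a)
    (fun f g => dmul Δ f.1 g.2.1 a + g.2.2.1 f.1 a) (fun f g hf hg => ?_) (fun f g hbr => ?_)⟩
  · rw [map_add, pairT_map, toFunc_comp_inclA, toFunc_comp_inclPrime,
      pairT_derivTensor g hg hφ hexp (u := f.1)
        (fun i => LinearMap.congr_fun (toFunc_comp_inclA f hf) (b i))]
    rfl
  · rw [← LinearMap.comp_apply, toFunc_comp_inclA]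
    simp only [bracketStar, LinearMap.add_apply, LinearMap.sub_apply]
    ring

theorem exists_inclPrime_mem_cobracketGraph (hφ : IsMixedPairing Δ φ)
    (hexp : ∀ e ∈ WIntDer Δ, ∀ u, e u a = ∑ i, e (c i) a * u (b i)) :
    ∃ t, (inclPrime Δ a, t) ∈ cobracketGraph Δ φ := by
  refine ⟨_, sub_comm_mem_cobracketGraph
    (X := TensorProduct.map (inclA Δ) (inclBar Δ) (Δ a) + derivTensor Δ c (inclPrime Δ ∘ b) a)
    (fun f g => dmul Δ f.1 g.2.2.2 a + g.2.2.1 f.2.1 a) (fun f g hf hg => ?_)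
    (fun f g hbr => ?_)⟩
  · rw [map_add, pairT_map, toFunc_comp_inclA, toFunc_comp_inclBar,
      pairT_derivTensor g hg hφ hexp (u := f.2.1)
        (fun i => LinearMap.congr_fun (toFunc_comp_inclPrime f hf) (b i))]
    rfl
  · rw [← LinearMap.comp_apply, toFunc_comp_inclPrime]
    simp only [bracketStar, LinearMap.add_apply, LinearMap.sub_apply]
    ring

theorem exists_inclBar_mem_cobracketGraph (hφ : IsMixedPairing Δ φ)
    (hexp : ∀ e ∈ WIntDer Δ, ∀ u, e u a = ∑ i, e (c i) a * u (b i)) :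
    ∃ t, (inclBar Δ a, t) ∈ cobracketGraph Δ φ := by
  refine ⟨_, sub_comm_mem_cobracketGraph
    (X := derivTensor Δ c (inclBar Δ ∘ b) a - TensorProduct.map (inclBar Δ) (inclPrime Δ) (Δ a))
    (fun f g => g.2.2.1 f.2.2.2 a - dmul Δ f.2.2.2 g.2.1 a) (fun f g hf hg => ?_)
    (fun f g hbr => ?_)⟩
  · rw [map_sub, pairT_map, toFunc_comp_inclBar, toFunc_comp_inclPrime,
      pairT_derivTensor g hg hφ hexp (u := f.2.2.2)
        (fun i => LinearMap.congr_fun (toFunc_comp_inclBar f hf) (b i))]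
    rfl
  · rw [← LinearMap.comp_apply, toFunc_comp_inclBar]
    simp only [bracketStar, LinearMap.add_apply, LinearMap.sub_apply, LinearMap.neg_apply]
    ring

theorem exists_inclComm_mixed_mem_cobracketGraph (hφ : IsMixedPairing Δ φ)
    (hexp : ∀ e ∈ WIntDer Δ, ∀ u, e u a = ∑ i, e (c i) a * u (b i)) (h : A →ₗ[k] k) :
    ∃ t, (inclComm Δ (CommAA.mixed Δ h a), t) ∈ cobracketGraph Δ φ := by
  refine ⟨_, sub_comm_mem_cobracketGraph
    (X := TensorProduct.map (inclPrime Δ ∘ₗ ract Δ h) (inclPrime Δ) (Δ a)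
      - TensorProduct.map (inclA Δ ∘ₗ ract Δ h) (inclBar Δ) (Δ a)
      - TensorProduct.map (inclBar Δ ∘ₗ ract Δ h) (inclA Δ) (Δ a)
      + derivTensor Δ c (fun i => inclComm Δ (CommAA.mixed Δ h (b i))) a)
    (fun f g => dmul Δ (dmul Δ h f.2.1) g.2.1 a - dmul Δ (dmul Δ h f.1) g.2.2.2 a
      - dmul Δ (dmul Δ h f.2.2.2) g.1 a + g.2.2.1 (f.2.2.1 h) a)
    (fun f g hf hg => ?_) (fun f g hbr => ?_)⟩
  · rw [map_add, pairT_derivTensor g hg hφ hexp (u := f.2.2.1 h)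
      (fun i => (toFunc_inclComm f hf _).trans (hφ _ _ _))]
    simp only [map_sub, pairT_map, ← LinearMap.comp_assoc, toFunc_comp_inclA,
      toFunc_comp_inclPrime, toFunc_comp_inclBar, comp_ract_eq_dmul]
    rfl
  · rw [toFunc_inclComm, hφ]
    simp only [bracketStar, commD, Rop, LinearMap.add_apply, LinearMap.sub_apply,
      LinearMap.neg_apply, LinearMap.comp_apply, LinearMap.coe_mk, AddHom.coe_mk]
    ring

end Generators

theorem IsSubcoalgebra.le_map_fst_cobracketGraph {Δ : A →ₗ[k] A ⊗[k] A}
    {φ : ↥(WIntDer Δ) →ₗ[k] (↥(CommAA Δ) →ₗ[k] k)} (hφ : IsMixedPairing Δ φ)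
    {B : Submodule k A} (hB : IsSubcoalgebra Δ B) (hBfin : FiniteDimensional k B) :
    B.prod (B.prod ((Submodule.comap (CommAA Δ).subtype
        (Submodule.span k {u | ∃ (f : A →ₗ[k] k), ∃ b ∈ B, u = commMixed Δ f b})).prod B))
      ≤ (cobracketGraph Δ φ).map (LinearMap.fst k _ _) := by
  set D := (cobracketGraph Δ φ).map (LinearMap.fst k _ _)
  have mem_D : ∀ {x : LKKT Δ}, (∃ t, (x, t) ∈ cobracketGraph Δ φ) → x ∈ D :=
    fun ⟨t, ht⟩ => ⟨(_, t), ht, rfl⟩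
  obtain ⟨n, b, c, hbc⟩ := B.exists_sum_smul_eq_of_finiteDimensional
  have hexp : ∀ a ∈ B, ∀ e ∈ WIntDer Δ, ∀ u, e u a = ∑ i, e (c i) a * u (b i) :=
    fun a ha e he u => hB.WIntDer_apply_eq_sum hBfin hbc he ha u
  have hComm : Submodule.span k {u | ∃ (f : A →ₗ[k] k), ∃ b ∈ B, u = commMixed Δ f b}
      ≤ (D.comap (inclComm Δ)).map (CommAA Δ).subtype := by
    rw [Submodule.span_le]
    rintro _ ⟨h, a, ha, rfl⟩
    exact ⟨CommAA.mixed Δ h a,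
      mem_D (exists_inclComm_mixed_mem_cobracketGraph hφ (hexp a ha) h), rfl⟩
  rintro x ⟨ha, hb, hv, hc⟩
  obtain ⟨w, hw, hwv⟩ := hComm hv
  rw [eq_inclA_add_inclPrime_add_inclComm_add_inclBar Δ x, ← Subtype.ext hwv]
  exact D.add_mem (D.add_mem (D.add_mem
    (mem_D (exists_inclA_mem_cobracketGraph hφ (hexp _ ha)))
    (mem_D (exists_inclPrime_mem_cobracketGraph hφ (hexp _ hb)))) hw)
    (mem_D (exists_inclBar_mem_cobracketGraph hφ (hexp _ hc)))

theorem lemma5_DeltaB_general {k : Type*} [Field k] {A : Type*} [AddCommGroup A] [Module k A]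
    (Δ : A →ₗ[k] A ⊗[k] A)
    (φ : ↥(WIntDer Δ) →ₗ[k] (↥(CommAA Δ) →ₗ[k] k))
    (hφ : ∀ (e : ↥(WIntDer Δ)) (f : A →ₗ[k] k) (a : A) (h : commMixed Δ f a ∈ CommAA Δ),
      φ e ⟨commMixed Δ f a, h⟩ = (e : ((A →ₗ[k] k) →ₗ[k] (A →ₗ[k] k))) f a)
    (B : Submodule k A) (hB : IsSubcoalgebra Δ B) (hBfin : FiniteDimensional k B) :
    ∃ ΔB : ↥((B.prod (B.prod ((Submodule.comap (CommAA Δ).subtype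
          (Submodule.span k {u | ∃ (f : A →ₗ[k] k), ∃ b ∈ B, u = commMixed Δ f b})).prod B)))
        : Submodule k (LKKT Δ)) →ₗ[k] (LKKT Δ ⊗[k] LKKT Δ),
      ∀ (f g : (A →ₗ[k] k) × (A →ₗ[k] k) × ((A →ₗ[k] k) →ₗ[k] (A →ₗ[k] k)) × (A →ₗ[k] k))
        (hf : f.2.2.1 ∈ WIntDer Δ) (hg : g.2.2.1 ∈ WIntDer Δ)
        (hbr : (bracketStar Δ f g).2.2.1 ∈ WIntDer Δ)
        (l : ↥((B.prod (B.prod ((Submodule.comap (CommAA Δ).subtype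
          (Submodule.span k {u | ∃ (f : A →ₗ[k] k), ∃ b ∈ B, u = commMixed Δ f b})).prod B)))
        : Submodule k (LKKT Δ))),
        toFunc Δ φ (bracketStar Δ f g) hbr (l : LKKT Δ)
          = pairT (M := LKKT Δ) (toFunc Δ φ f hf) (toFunc Δ φ g hg) (ΔB l) := by
  obtain ⟨ΔB, hΔB⟩ := Submodule.exists_linearMap_mem_of_le_map_fst _ _
    (hB.le_map_fst_cobracketGraph (fun e f a => hφ e f a _) hBfin)
  exact ⟨ΔB, fun f g hf hg hbr l => hΔB l f g hf hg hbr⟩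

set_option maxHeartbeats 2000000 in
set_option synthInstance.maxHeartbeats 2000000 in
/-- **Lemma 5.** For a finite-dimensional subcoalgebra `B` of `⟨A, Δ⟩`, on the subspace
`L = B ⊕ B' ⊕ [A*,B] ⊕ B̄` of `L(A)` there is a linear map `Δ_B : L → L(A) ⊗ L(A)`
such that `⟨[f,g], l⟩ = ⟨ρ(f ⊗ g), Δ_B(l)⟩` for all `f, g ∈ L(A*)`, `l ∈ L`. -/
theorem lemma5_DeltaB {k : Type*} [Field k] {A : Type*} [AddCommGroup A] [Module k A]
    (h2 : (2 : k) ≠ 0) (Δ : A →ₗ[k] A ⊗[k] A) (hJ : IsJordanCoalgebra Δ)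
    (one : A →ₗ[k] k) (hone : ∀ f, dmul Δ one f = f ∧ dmul Δ f one = f)
    (φ : ↥(WIntDer Δ) →ₗ[k] (↥(CommAA Δ) →ₗ[k] k))
    (hφ : ∀ (e : ↥(WIntDer Δ)) (f : A →ₗ[k] k) (a : A) (h : commMixed Δ f a ∈ CommAA Δ),
      φ e ⟨commMixed Δ f a, h⟩ = (e : ((A →ₗ[k] k) →ₗ[k] (A →ₗ[k] k))) f a)
    (hφbij : Function.Bijective φ)
    (B : Submodule k A) (hB : IsSubcoalgebra Δ B) (hBfin : FiniteDimensional k B) :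
    ∃ ΔB : ↥((B.prod (B.prod ((Submodule.comap (CommAA Δ).subtype
          (Submodule.span k {u | ∃ (f : A →ₗ[k] k), ∃ b ∈ B, u = commMixed Δ f b})).prod B)))
        : Submodule k (LKKT Δ)) →ₗ[k] (LKKT Δ ⊗[k] LKKT Δ),
      ∀ (f g : (A →ₗ[k] k) × (A →ₗ[k] k) × ((A →ₗ[k] k) →ₗ[k] (A →ₗ[k] k)) × (A →ₗ[k] k))
        (hf : f.2.2.1 ∈ WIntDer Δ) (hg : g.2.2.1 ∈ WIntDer Δ)
        (hbr : (bracketStar Δ f g).2.2.1 ∈ WIntDer Δ)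
        (l : ↥((B.prod (B.prod ((Submodule.comap (CommAA Δ).subtype
          (Submodule.span k {u | ∃ (f : A →ₗ[k] k), ∃ b ∈ B, u = commMixed Δ f b})).prod B)))
        : Submodule k (LKKT Δ))),
        toFunc Δ φ (bracketStar Δ f g) hbr (l : LKKT Δ)
          = pairT (M := LKKT Δ) (toFunc Δ φ f hf) (toFunc Δ φ g hg) (ΔB l) :=
  lemma5_DeltaB_general Δ φ hφ B hB hBfin
end
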